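/- Let φ be a vector-valued modular form of weight α with respect to a representation ρ of Γ on ℂⁿ, and ψ a vector-valued modular form of weight β with respect to the contragredient ρ*, with α, β ≥ 0. For a nonnegative integer w, the scalar-valued function [[φ, ψ]]_w^{(α,β)}(z) = Σ_{r=0}^{w} (−1)^r C(α+w−1, w−r) C(β+w−1, r) ᵗ(φ^{(r)}(z)) ψ^{(w−r)}(z) is a (scalar) modular form of weight α+β+2w for Γ. -/

import Mathlib

open Matrix Complex Finset

abbrev SL2R := Matrix.SpecialLinearGroup (Fin 2) ℝ

noncomputable def Jf (γ : SL2R) (z : ℂ) : ℂ := (γ.1 1 0 : ℝ) * z + (γ.1 1 1 : ℝ)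

noncomputable def actSL (γ : SL2R) (z : ℂ) : ℂ :=
  ((γ.1 0 0 : ℝ) * z + (γ.1 0 1 : ℝ)) / Jf γ z

/-- Generalized binomial coefficient C(a, r) = a(a−1)⋯(a−r+1)/r! for a ∈ ℤ. -/
noncomputable def gchoose (a : ℤ) (r : ℕ) : ℂ :=
  (∏ i ∈ Finset.range r, ((a : ℂ) - (i : ℂ))) / (r.factorial : ℂ)

/-- Vector-valued modular form of weight k for Γ with respect to a real
representation ρ. -/
def IsVVMF {ι : Type} [Fintype ι] (Γ : Subgroup SL2R)
    (ρ : SL2R → Matrix ι ι ℝ) (k : ℤ) (f : ℂ → ι → ℂ) : Prop :=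
  DifferentiableOn ℂ f {z : ℂ | 0 < z.im} ∧
    ∀ γ ∈ Γ, ∀ z : ℂ, 0 < z.im →
      f (actSL γ z) = Jf γ z ^ k • ((ρ γ).map Complex.ofReal *ᵥ f z)

/-- Scalar modular form of weight k for Γ. -/
def IsMF (Γ : Subgroup SL2R) (k : ℤ) (f : ℂ → ℂ) : Prop :=
  DifferentiableOn ℂ f {z : ℂ | 0 < z.im} ∧
    ∀ γ ∈ Γ, ∀ z : ℂ, 0 < z.im → f (actSL γ z) = Jf γ z ^ k * f z

/-! Differentiating `f (γ z) = (cz + d) ^ k • Q f(z)` repeatedly gives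
`f⁽ʳ⁾(γ z) = ∑ⱼ A(k, r, j) c ^ (r - j) (cz + d) ^ (k + r + j) • Q f⁽ʲ⁾(z)`
with `A(k, r, j) = C(r, j) (k + j)(k + j + 1)⋯(k + r - 1)`. Substituting this into the pairing and
using `ᵗ(Q x) (ᵗQ⁻¹ y) = ᵗx y`, the term `ᵗφ⁽ʲ⁾ ψ⁽ᵐ⁾` comes with the factor
`c ^ (w - j - m) (cz + d) ^ (α + β + w + j + m)` times
`∑ᵣ (-1)ʳ C(α + w - 1, w - r) C(β + w - 1, r) A(α, r, j) A(β, w - r, m)`.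
For `j + m = w` only `r = j` contributes; for `j + m < w` the summand with `r = j + t` is a constant
multiple of `(-1)ᵗ C(w - j - m, t)`, so the sum vanishes. -/

local notation "𝔥" => Set.ofPred fun z : ℂ => 0 < Complex.im z

lemma isOpen_upperHalfPlaneSet : IsOpen 𝔥 := isOpen_lt continuous_const continuous_im

lemma SL2R.det_entries (γ : SL2R) : γ.1 0 0 * γ.1 1 1 - γ.1 0 1 * γ.1 1 0 = 1 := by
  rw [← det_fin_two]
  exact γ.2

lemma Jf_ne_zero (γ : SL2R) {z : ℂ} (hz : 0 < z.im) : Jf γ z ≠ 0 := by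
  intro h
  have him : γ.1 1 0 * z.im = 0 := by simpa [Jf] using congrArg im h
  have hre : γ.1 1 0 * z.re + γ.1 1 1 = 0 := by simpa [Jf] using congrArg re h
  have hc : γ.1 1 0 = 0 := (mul_eq_zero.mp him).resolve_right hz.ne'
  have hd : γ.1 1 1 = 0 := by simpa [hc] using hre
  simpa [hc, hd] using SL2R.det_entries γ

lemma im_actSL (γ : SL2R) {z : ℂ} (hz : 0 < z.im) :
    (actSL γ z).im = z.im / normSq (Jf γ z) := by
  have hJ : normSq (Jf γ z) ≠ 0 := normSq_eq_zero.not.mpr (Jf_ne_zero γ hz)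
  rw [actSL, div_im]
  simp only [Jf, add_re, add_im, mul_re, mul_im, ofReal_re, ofReal_im, zero_mul, sub_zero,
    add_zero] at hJ ⊢
  field_simp
  linear_combination SL2R.det_entries γ

lemma im_actSL_pos (γ : SL2R) {z : ℂ} (hz : 0 < z.im) : 0 < (actSL γ z).im := by
  rw [im_actSL γ hz]
  exact div_pos hz (normSq_pos.mpr (Jf_ne_zero γ hz))

lemma hasDerivAt_Jf (γ : SL2R) (z : ℂ) : HasDerivAt (Jf γ) (γ.1 1 0 : ℂ) z := by
  have h := ((hasDerivAt_id z).const_mul (γ.1 1 0 : ℂ)).add_const (γ.1 1 1 : ℂ)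
  rwa [mul_one] at h

lemma hasDerivAt_actSL (γ : SL2R) {z : ℂ} (hz : 0 < z.im) :
    HasDerivAt (actSL γ) (Jf γ z ^ 2)⁻¹ z := by
  have hnum : HasDerivAt (fun z : ℂ => γ.1 0 0 * z + γ.1 0 1) (γ.1 0 0 : ℂ) z := by
    simpa using ((hasDerivAt_id z).const_mul (γ.1 0 0 : ℂ)).add_const (γ.1 0 1 : ℂ)
  refine (hnum.div (hasDerivAt_Jf γ z) (Jf_ne_zero γ hz)).congr_deriv ?_
  have hdet : (γ.1 0 0 : ℂ) * γ.1 1 1 - γ.1 0 1 * γ.1 1 0 = 1 := by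
    exact_mod_cast SL2R.det_entries γ
  have hwronskian : (γ.1 0 0 : ℂ) * Jf γ z - (γ.1 0 0 * z + γ.1 0 1) * γ.1 1 0 = 1 := by
    rw [Jf]
    linear_combination hdet
  rw [hwronskian, one_div]

lemma hasDerivAt_Jf_pow (γ : SL2R) (n : ℕ) {z : ℂ} (hz : 0 < z.im) :
    HasDerivAt (fun x => Jf γ x ^ n) ((Jf γ z ^ 2)⁻¹ * (n * γ.1 1 0 * Jf γ z ^ (n + 1))) z := by
  refine ((hasDerivAt_Jf γ z).pow n).congr_deriv ?_
  have hJ := Jf_ne_zero γ hz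
  rcases n with _ | n
  · simp
  · rw [Nat.add_sub_cancel]
    field_simp
    ring

/-- `derivCoeff k r j = C(r, j) (k + j)(k + j + 1)⋯(k + r - 1)` is the coefficient of
`c ^ (r - j) (cz + d) ^ (k + r + j) f⁽ʲ⁾(z)` in `f⁽ʳ⁾(γ z)` when `f` has weight `k`. -/
noncomputable def derivCoeff (k r j : ℕ) : ℂ :=
  (r.choose j : ℂ) * ∏ i ∈ Ico j r, ((k : ℂ) + i)

@[simp] lemma derivCoeff_self (k r : ℕ) : derivCoeff k r r = 1 := by
  simp [derivCoeff]

lemma derivCoeff_of_lt (k : ℕ) {r j : ℕ} (h : r < j) : derivCoeff k r j = 0 := by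
  simp [derivCoeff, Nat.choose_eq_zero_of_lt h]

lemma derivCoeff_succ_zero (k r : ℕ) : derivCoeff k (r + 1) 0 = (k + r) * derivCoeff k r 0 := by
  simp only [derivCoeff, Nat.choose_zero_right, Nat.cast_one, one_mul]
  rw [prod_Ico_succ_top (Nat.zero_le _), mul_comm]

lemma derivCoeff_succ_succ (k r j : ℕ) :
    derivCoeff k (r + 1) (j + 1) = (k + r + j + 1) * derivCoeff k r (j + 1) + derivCoeff k r j := by
  rcases lt_trichotomy j r with hjr | rfl | hrj
  · have hchoose : ((r + 1).choose (j + 1) : ℂ) = r.choose (j + 1) + r.choose j := by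
      push_cast [Nat.choose_succ_succ]
      ring
    have hkey : ((r : ℂ) - j) * r.choose j = (j + 1) * r.choose (j + 1) := by
      have h := congrArg (Nat.cast (R := ℂ)) (Nat.choose_succ_right_eq r j)
      push_cast [Nat.cast_sub hjr.le] at h
      linear_combination -h
    rw [derivCoeff, derivCoeff, derivCoeff, prod_Ico_succ_top (by omega),
      prod_eq_prod_Ico_succ_bot hjr, hchoose]
    linear_combination (∏ i ∈ Ico (j + 1) r, ((k : ℂ) + i)) * hkey
  · simp [derivCoeff_of_lt k (lt_add_one j)]
  · simp [derivCoeff_of_lt k hrj, derivCoeff_of_lt k (Nat.succ_lt_succ hrj),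
      derivCoeff_of_lt k (hrj.trans (lt_add_one j))]

/-- One step of the induction computing `f⁽ʳ⁾(γ z)`: the right-hand side is `(cz + d) ^ 2` times the
derivative of the formula at level `r`. -/
lemma sum_derivCoeff_succ {E : Type*} [AddCommGroup E] [Module ℂ E] (k r : ℕ) (c J : ℂ)
    (v : ℕ → E) :
    ∑ j ∈ range (r + 1 + 1),
        (derivCoeff k (r + 1) j * c ^ (r + 1 - j) * J ^ (k + (r + 1) + j)) • v j =
      ∑ j ∈ range (r + 1), ((derivCoeff k r j * c ^ (r - j) * J ^ (k + r + j + 2)) • v (j + 1) +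
        (derivCoeff k r j * c ^ (r - j) * ((k + r + j : ℕ) * c * J ^ (k + r + j + 1))) • v j) := by
  have hlow : ∑ j ∈ range (r + 1),
        (derivCoeff k r j * c ^ (r - j) * ((k + r + j : ℕ) * c * J ^ (k + r + j + 1))) • v j =
      ∑ j ∈ range (r + 1), (((k + r + j + 1 : ℕ) : ℂ) * derivCoeff k r (j + 1) * c ^ (r - j) *
          J ^ (k + r + j + 2)) • v (j + 1) +
        (derivCoeff k (r + 1) 0 * c ^ (r + 1) * J ^ (k + r + 1)) • v 0 := by
    rw [sum_range_succ', sum_range_succ _ r, derivCoeff_of_lt k (lt_add_one r),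
      derivCoeff_succ_zero]
    simp only [mul_zero, zero_mul, zero_smul, add_zero]
    congr 1
    · refine sum_congr rfl fun j hj => ?_
      have hcj : c ^ (r - (j + 1)) * c = c ^ (r - j) := by
        rw [← pow_succ]
        congr 1
        have := mem_range.mp hj
        omega
      rw [← hcj]
      congr 1
      push_cast
      ring
    · congr 1
      simp only [Nat.sub_zero]
      push_cast
      ring
  rw [sum_range_succ', sum_add_distrib, hlow, ← add_assoc (∑ j ∈ range (r + 1), (_ : E)),
    ← sum_add_distrib]
  congr 1
  refine sum_congr rfl fun j _ => ?_
  rw [← add_smul, derivCoeff_succ_succ, Nat.add_sub_add_right,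
    show k + (r + 1) + (j + 1) = k + r + j + 2 by omega]
  congr 1
  push_cast
  ring

section iteratedDeriv

variable {E : Type*} [NormedAddCommGroup E] [NormedSpace ℂ E] [CompleteSpace E]
  {f : ℂ → E} {s : Set ℂ}

lemma DifferentiableOn.analyticOnNhd_iteratedDeriv (hs : IsOpen s) (hf : DifferentiableOn ℂ f s)
    (r : ℕ) : AnalyticOnNhd ℂ (iteratedDeriv r f) s := by
  induction r with
  | zero => simpa using hf.analyticOnNhd hs
  | succ r ih => simpa only [iteratedDeriv_succ] using ih.deriv

lemma DifferentiableOn.hasDerivAt_iteratedDeriv (hs : IsOpen s) (hf : DifferentiableOn ℂ f s)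
    (r : ℕ) {z : ℂ} (hz : z ∈ s) :
    HasDerivAt (iteratedDeriv r f) (iteratedDeriv (r + 1) f z) z := by
  rw [iteratedDeriv_succ]
  exact ((hf.analyticOnNhd_iteratedDeriv hs r z hz).differentiableAt).hasDerivAt

theorem iteratedDeriv_comp_actSL (γ : SL2R) (k : ℕ) (L : E →L[ℂ] E)
    (hf : DifferentiableOn ℂ f 𝔥) (hfγ : ∀ z ∈ 𝔥, f (actSL γ z) = Jf γ z ^ k • L (f z))
    (r : ℕ) {z : ℂ} (hz : z ∈ 𝔥) :
    iteratedDeriv r f (actSL γ z) = ∑ j ∈ range (r + 1),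
      (derivCoeff k r j * (γ.1 1 0 : ℂ) ^ (r - j) * Jf γ z ^ (k + r + j)) •
        L (iteratedDeriv j f z) := by
  induction r generalizing z with
  | zero => simpa using hfγ z hz
  | succ r ih =>
    set c : ℂ := ((γ.1 1 0 : ℝ) : ℂ)
    have hJ := Jf_ne_zero γ hz
    have hterm (j : ℕ) : HasDerivAt
        (fun x => (derivCoeff k r j * c ^ (r - j) * Jf γ x ^ (k + r + j)) • L (iteratedDeriv j f x))
        ((Jf γ z ^ 2)⁻¹ •
          ((derivCoeff k r j * c ^ (r - j) * Jf γ z ^ (k + r + j + 2)) •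
              L (iteratedDeriv (j + 1) f z) +
            (derivCoeff k r j * c ^ (r - j) * ((k + r + j : ℕ) * c * Jf γ z ^ (k + r + j + 1))) •
              L (iteratedDeriv j f z))) z := by
      have hvec := L.hasFDerivAt.comp_hasDerivAt z
        (hf.hasDerivAt_iteratedDeriv isOpen_upperHalfPlaneSet j hz)
      refine (((hasDerivAt_Jf_pow γ _ hz).const_mul _).smul hvec).congr_deriv ?_
      rw [smul_add, smul_smul, smul_smul]
      congr 2
      · field_simp
        ring
      · ring
    have hlhs := (hf.hasDerivAt_iteratedDeriv isOpen_upperHalfPlaneSet r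
      (im_actSL_pos γ hz)).scomp z (hasDerivAt_actSL γ hz)
    have hrhs := (HasDerivAt.fun_sum fun j (_ : j ∈ range (r + 1)) => hterm j).congr_of_eventuallyEq
      (Filter.eventually_of_mem (isOpen_upperHalfPlaneSet.mem_nhds hz) fun x hx => ih hx)
    have hderiv := hlhs.unique hrhs
    rw [← smul_sum] at hderiv
    rw [smul_right_injective E (inv_ne_zero (pow_ne_zero 2 hJ)) hderiv, sum_derivCoeff_succ]

theorem iteratedDeriv_comp_actSL_of_le (γ : SL2R) (k : ℕ) (L : E →L[ℂ] E)
    (hf : DifferentiableOn ℂ f 𝔥) (hfγ : ∀ z ∈ 𝔥, f (actSL γ z) = Jf γ z ^ k • L (f z))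
    {r M : ℕ} (hr : r ≤ M) {z : ℂ} (hz : z ∈ 𝔥) :
    iteratedDeriv r f (actSL γ z) = ∑ j ∈ range (M + 1),
      (derivCoeff k r j * (γ.1 1 0 : ℂ) ^ (r - j) * Jf γ z ^ (k + r + j)) •
        L (iteratedDeriv j f z) := by
  rw [iteratedDeriv_comp_actSL γ k L hf hfγ r hz]
  refine sum_subset (range_subset_range.mpr (by omega)) fun j _ hj => ?_
  rw [derivCoeff_of_lt k (by simpa using hj), zero_mul, zero_mul, zero_smul]

end iteratedDeriv

section

open scoped Nat

noncomputable def rankinCohenCoeff (a b w r : ℕ) : ℂ :=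
  (-1) ^ r * gchoose ((a : ℤ) + w - 1) (w - r) * gchoose ((b : ℤ) + w - 1) r

lemma gchoose_mul_derivCoeff {k w j m t u N : ℕ} (hN : t + u = N) (hw : j + m + N = w) :
    gchoose ((k : ℤ) + w - 1) (m + u) * derivCoeff k (j + t) j =
      (∏ i ∈ range m, ((k : ℂ) + w - 1 - i)) * (∏ i ∈ Ico j (j + N), ((k : ℂ) + i)) *
        ((j + t)! / (j ! * t ! * (m + u)!)) := by
  have hsplit : ∏ i ∈ range (m + u), ((k : ℂ) + w - 1 - i) =
      (∏ i ∈ range m, ((k : ℂ) + w - 1 - i)) * ∏ i ∈ range u, ((k : ℂ) + (j + t + i : ℕ)) := by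
    rw [prod_range_add, ← prod_range_reflect (fun i => (k : ℂ) + (j + t + i : ℕ)) u]
    congr 1
    refine prod_congr rfl fun i hi => ?_
    have hiu := mem_range.mp hi
    rw [← hw, ← hN, Nat.cast_add]
    push_cast [Nat.sub_sub, Nat.cast_sub (show 1 + i ≤ u by omega)]
    ring
  have hjoin : ∏ i ∈ Ico j (j + N), ((k : ℂ) + i) =
      (∏ i ∈ Ico j (j + t), ((k : ℂ) + i)) * ∏ i ∈ range u, ((k : ℂ) + (j + t + i : ℕ)) := by
    rw [← prod_Ico_consecutive _ (j.le_add_right t) (by omega),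
      prod_Ico_eq_prod_range _ (j + t), show j + N - (j + t) = u by omega]
  simp only [gchoose, derivCoeff, Nat.cast_add_choose]
  push_cast
  rw [hsplit, hjoin]
  field_simp

lemma exists_rankinCohenCoeff_mul_derivCoeff_eq (a b j m N : ℕ) :
    ∃ K : ℂ, ∀ t ≤ m + N, rankinCohenCoeff a b (j + m + N) (j + t) * derivCoeff a (j + t) j *
      derivCoeff b (j + m + N - (j + t)) m = K * ((-1) ^ t * N.choose t) := by
  set w := j + m + N with hw
  refine ⟨(-1) ^ j * (∏ i ∈ range m, ((a : ℂ) + w - 1 - i)) * (∏ i ∈ Ico j (j + N), ((a : ℂ) + i)) *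
    (∏ i ∈ range j, ((b : ℂ) + w - 1 - i)) * (∏ i ∈ Ico m (m + N), ((b : ℂ) + i)) /
      (j ! * m ! * N !), fun t htw => ?_⟩
  rcases le_or_gt t N with ht | ht
  · obtain ⟨u, hN⟩ : ∃ u, t + u = N := ⟨N - t, by omega⟩
    have ha := gchoose_mul_derivCoeff (k := a) hN hw.symm
    have hb := gchoose_mul_derivCoeff (k := b) (j := m) (m := j) (t := u) (u := t) (N := N) (w := w)
      (by omega) (by omega)
    rw [show w - (j + t) = m + u by omega, rankinCohenCoeff, show w - (j + t) = m + u by omega,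
      Nat.cast_choose ℂ ht, ← hN, Nat.add_sub_cancel_left]
    calc _ = (-1) ^ (j + t) * (gchoose (a + w - 1) (m + u) * derivCoeff a (j + t) j) *
          (gchoose (b + w - 1) (j + t) * derivCoeff b (m + u) m) := by ring
      _ = _ := by
        rw [ha, hb, hN]
        field_simp [Nat.factorial_ne_zero]
        ring
  · rw [derivCoeff_of_lt b (show w - (j + t) < m by omega), Nat.choose_eq_zero_of_lt ht]
    simp

theorem sum_rankinCohenCoeff_mul_derivCoeff (a b w j m : ℕ) :
    ∑ r ∈ range (w + 1), rankinCohenCoeff a b w r * derivCoeff a r j * derivCoeff b (w - r) m =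
      if j + m = w then rankinCohenCoeff a b w j else 0 := by
  have hzero (r : ℕ) (h : r < j ∨ w - r < m) :
      rankinCohenCoeff a b w r * derivCoeff a r j * derivCoeff b (w - r) m = 0 := by
    rcases h with h | h <;> simp [derivCoeff_of_lt _ h]
  rcases lt_trichotomy (j + m) w with hlt | rfl | hgt
  · obtain ⟨n, rfl⟩ : ∃ n, w = j + m + (n + 1) := ⟨w - j - m - 1, by omega⟩
    obtain ⟨K, hK⟩ := exists_rankinCohenCoeff_mul_derivCoeff_eq a b j m (n + 1)
    have halt : ∑ t ∈ range (m + (n + 1) + 1), (-1 : ℂ) ^ t * (n + 1).choose t = 0 := by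
      have h := Int.alternating_sum_range_choose_eq_choose (n := n) (m := m + (n + 1))
      rw [Nat.choose_eq_zero_of_lt (by omega), Nat.cast_zero, mul_zero] at h
      exact_mod_cast h
    rw [if_neg hlt.ne, show j + m + (n + 1) + 1 = j + (m + (n + 1) + 1) by omega, sum_range_add,
      sum_eq_zero fun r hr => hzero r (.inl (mem_range.mp hr)), zero_add,
      sum_congr rfl fun t ht => hK t (Nat.lt_succ_iff.mp (mem_range.mp ht)), ← mul_sum, halt,
      mul_zero]
  · rw [if_pos rfl, sum_eq_single j]
    · simp
    · intro r hr hrj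
      exact hzero r (by have := mem_range.mp hr; omega)
    · intro hj
      exact absurd (mem_range.mpr (by omega)) hj
  · rw [if_neg hgt.ne']
    exact sum_eq_zero fun r hr => hzero r (by have := mem_range.mp hr; omega)

end

lemma derivCoeff_mul_derivCoeff_mul_pow (a b w r j m : ℕ) (c J : ℂ) (hr : r ≤ w) :
    derivCoeff a r j * c ^ (r - j) * J ^ (a + r + j) *
        (derivCoeff b (w - r) m * c ^ (w - r - m) * J ^ (b + (w - r) + m)) =
      derivCoeff a r j * derivCoeff b (w - r) m * (c ^ (w - j - m) * J ^ (a + b + w + j + m)) := by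
  rcases lt_or_ge r j with hj | hj
  · simp [derivCoeff_of_lt a hj]
  rcases lt_or_ge (w - r) m with hm | hm
  · simp [derivCoeff_of_lt b hm]
  rw [show w - j - m = (r - j) + (w - r - m) by omega,
    show a + b + w + j + m = (a + r + j) + (b + (w - r) + m) by omega, pow_add, pow_add]
  ring

lemma DifferentiableOn.dotProduct {𝕜 ι : Type*} [NontriviallyNormedField 𝕜] [Fintype ι]
    {f g : 𝕜 → ι → 𝕜} {s : Set 𝕜} (hf : DifferentiableOn 𝕜 f s) (hg : DifferentiableOn 𝕜 g s) :
    DifferentiableOn 𝕜 (fun z => f z ⬝ᵥ g z) s :=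
  .fun_sum fun i _ => (differentiableOn_pi.mp hf i).mul (differentiableOn_pi.mp hg i)

lemma dotProduct_mulVec_map_inv_transpose {ι : Type*} [Fintype ι] [DecidableEq ι]
    (P : Matrix ι ι ℝ) (hP : IsUnit P.det) (x y : ι → ℂ) :
    (P.map ofReal *ᵥ x) ⬝ᵥ ((Pᵀ)⁻¹.map ofReal *ᵥ y) = x ⬝ᵥ y := by
  have hinv : (P.map ofReal)ᵀ * (Pᵀ)⁻¹.map ofReal = 1 := by
    rw [← transpose_map]
    change (Pᵀ).map ofRealHom * (Pᵀ)⁻¹.map ofRealHom = 1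
    rw [← Matrix.map_mul, mul_nonsing_inv _ (by rwa [det_transpose]),
      Matrix.map_one _ (map_zero _) (map_one _)]
  rw [← vecMul_transpose, dotProduct_mulVec, vecMul_vecMul, hinv, vecMul_one]

theorem sum_rankinCohenCoeff_dotProduct_comp_actSL {ι : Type*} [Fintype ι] (γ : SL2R) (a b w : ℕ)
    (P P' : Matrix ι ι ℂ) (hPP' : ∀ x y, (P *ᵥ x) ⬝ᵥ (P' *ᵥ y) = x ⬝ᵥ y) {f g : ℂ → ι → ℂ}
    (hf : DifferentiableOn ℂ f 𝔥) (hg : DifferentiableOn ℂ g 𝔥)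
    (hfγ : ∀ z ∈ 𝔥, f (actSL γ z) = Jf γ z ^ a • (P *ᵥ f z))
    (hgγ : ∀ z ∈ 𝔥, g (actSL γ z) = Jf γ z ^ b • (P' *ᵥ g z)) {z : ℂ} (hz : z ∈ 𝔥) :
    ∑ r ∈ range (w + 1),
        rankinCohenCoeff a b w r *
          (iteratedDeriv r f (actSL γ z) ⬝ᵥ iteratedDeriv (w - r) g (actSL γ z)) =
      Jf γ z ^ (a + b + 2 * w) *
        ∑ r ∈ range (w + 1),
          rankinCohenCoeff a b w r * (iteratedDeriv r f z ⬝ᵥ iteratedDeriv (w - r) g z) := by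
  set c : ℂ := ((γ.1 1 0 : ℝ) : ℂ)
  set J := Jf γ z
  have hf_comp := fun r (hr : r ≤ w) => iteratedDeriv_comp_actSL_of_le γ a
    (LinearMap.toContinuousLinearMap P.mulVecLin) hf (by simpa using hfγ) hr hz
  have hg_comp := fun r (hr : r ≤ w) => iteratedDeriv_comp_actSL_of_le γ b
    (LinearMap.toContinuousLinearMap P'.mulVecLin) hg (by simpa using hgγ) hr hz
  simp only [LinearMap.coe_toContinuousLinearMap', mulVecLin_apply] at hf_comp hg_comp
  have hdot (r : ℕ) (hr : r ≤ w) :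
      iteratedDeriv r f (actSL γ z) ⬝ᵥ iteratedDeriv (w - r) g (actSL γ z) =
        ∑ j ∈ range (w + 1), ∑ m ∈ range (w + 1),
          derivCoeff a r j * derivCoeff b (w - r) m * (c ^ (w - j - m) * J ^ (a + b + w + j + m)) *
            (iteratedDeriv j f z ⬝ᵥ iteratedDeriv m g z) := by
    rw [hf_comp r hr, hg_comp (w - r) (Nat.sub_le w r), sum_dotProduct]
    refine sum_congr rfl fun j _ => ?_
    rw [dotProduct_sum]
    refine sum_congr rfl fun m _ => ?_
    rw [smul_dotProduct, dotProduct_smul, hPP', smul_eq_mul, smul_eq_mul, ← mul_assoc,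
      derivCoeff_mul_derivCoeff_mul_pow a b w r j m c J hr]
  calc _ = ∑ r ∈ range (w + 1), ∑ j ∈ range (w + 1), ∑ m ∈ range (w + 1),
          rankinCohenCoeff a b w r * (derivCoeff a r j * derivCoeff b (w - r) m *
            (c ^ (w - j - m) * J ^ (a + b + w + j + m)) *
              (iteratedDeriv j f z ⬝ᵥ iteratedDeriv m g z)) := by
        refine sum_congr rfl fun r hr => ?_
        rw [hdot r (Nat.lt_succ_iff.mp (mem_range.mp hr)), mul_sum]
        simp_rw [mul_sum]
    _ = ∑ j ∈ range (w + 1), ∑ m ∈ range (w + 1),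
          c ^ (w - j - m) * J ^ (a + b + w + j + m) * (iteratedDeriv j f z ⬝ᵥ iteratedDeriv m g z) *
            ∑ r ∈ range (w + 1),
              rankinCohenCoeff a b w r * derivCoeff a r j * derivCoeff b (w - r) m := by
        rw [sum_comm]
        refine sum_congr rfl fun j _ => ?_
        rw [sum_comm]
        refine sum_congr rfl fun m _ => ?_
        rw [mul_sum]
        exact sum_congr rfl fun r _ => by ring
    _ = ∑ j ∈ range (w + 1), J ^ (a + b + 2 * w) *
          (rankinCohenCoeff a b w j * (iteratedDeriv j f z ⬝ᵥ iteratedDeriv (w - j) g z)) := by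
        refine sum_congr rfl fun j hj => ?_
        have hjw := Nat.lt_succ_iff.mp (mem_range.mp hj)
        simp_rw [sum_rankinCohenCoeff_mul_derivCoeff, mul_ite, mul_zero]
        rw [sum_eq_single (w - j) (fun m _ hm => if_neg (by omega))
          (fun h => absurd (mem_range.mpr (by omega)) h), if_pos (by omega),
          show w - j - (w - j) = 0 by omega, show a + b + w + j + (w - j) = a + b + 2 * w by omega]
        ring
    _ = _ := (mul_sum ..).symm

/-- If φ ∈ M̂_α(Γ, ρ) and ψ ∈ M̂_β(Γ, ρ*) with ρ* the contragredient, then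
[[φ,ψ]]_w = Σ_{r=0}^w (−1)^r C(α+w−1, w−r) C(β+w−1, r) ᵗ(φ⁽ʳ⁾) ψ⁽ʷ⁻ʳ⁾
is a scalar modular form of weight α+β+2w for Γ. -/
theorem rankin_cohen_pairing (n : ℕ) (Γ : Subgroup SL2R)
    (ρ : SL2R → Matrix (Fin n) (Fin n) ℝ)
    (hρinv : ∀ γ : SL2R, IsUnit (ρ γ).det)
    (a b w : ℕ) (φ ψ : ℂ → Fin n → ℂ)
    (hφ : IsVVMF Γ ρ (a : ℤ) φ)
    (hψ : IsVVMF Γ (fun γ => ((ρ γ)ᵀ)⁻¹) (b : ℤ) ψ) :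
    IsMF Γ ((a : ℤ) + b + 2 * w)
      (fun z => ∑ r ∈ Finset.range (w + 1),
        (-1 : ℂ) ^ r * gchoose ((a : ℤ) + w - 1) (w - r) *
          gchoose ((b : ℤ) + w - 1) r *
          (iteratedDeriv r φ z ⬝ᵥ iteratedDeriv (w - r) ψ z)) := by
  have hdiff {f : ℂ → Fin n → ℂ} (hf : DifferentiableOn ℂ f 𝔥) (r : ℕ) :
      DifferentiableOn ℂ (iteratedDeriv r f) 𝔥 :=
    (hf.analyticOnNhd_iteratedDeriv isOpen_upperHalfPlaneSet r).differentiableOn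
  refine ⟨DifferentiableOn.fun_sum fun r _ =>
      (differentiableOn_const _).mul ((hdiff hφ.1 r).dotProduct (hdiff hψ.1 (w - r))),
    fun γ hγ z hz => ?_⟩
  rw [show (a : ℤ) + b + 2 * w = (a + b + 2 * w : ℕ) by push_cast; ring, zpow_natCast]
  exact sum_rankinCohenCoeff_dotProduct_comp_actSL γ a b w _ _
    (dotProduct_mulVec_map_inv_transpose (ρ γ) (hρinv γ)) hφ.1 hψ.1
    (fun z hz => by simpa using hφ.2 γ hγ z hz) (fun z hz => by simpa using hψ.2 γ hγ z hz) hz
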